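/- arXiv:1307.7060 — 3 statements merged into one kernel-verified Lean document; each statement's English description precedes it below -/
import Mathlib

section
/- For a standard Gaussian random variable N and every x ∈ ℝ, lim_{r→∞} P(N > r + e^{-x}/r) / P(N > r) = exp(-e^{-x}). Equivalently, the conditional law of -ln(N - r) - ln r given N > r converges to the Gumbel distribution: lim_{r→∞} P(-ln(N - r) - ln r ≤ x | N > r) = Λ(x) for all x. -/
/-!
Write `Φ̄(r) = ∫_r^∞ φ` for the standard Gaussian tail. Both `Φ̄(r + c/r)` and `Φ̄(r)` vanish as
`r → ∞`, so by L'Hôpital's rule their ratio has the limit of the ratio of derivatives,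
`φ(r + c/r) (1 - c/r²) / φ(r) = exp(-c - c²/(2r²)) (1 - c/r²) → e^{-c}`.
With `c = e^{-x}` this is the first limit. For `r > 0` the event `{N > r, -ln(N - r) - ln r ≤ x}`
is `{N ≥ r + e^{-x}/r}`, which has the same probability as `{N > r + e^{-x}/r}` since the
Gaussian law has no atoms.
-/

open MeasureTheory ProbabilityTheory Filter Real Set Topology

theorem hasDerivAt_integral_Ioi {f : ℝ → ℝ} (hf : Continuous f) (hfi : Integrable f) (a : ℝ) :
    HasDerivAt (fun r ↦ ∫ t in Ioi r, f t) (-f a) a := by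
  have h : (fun r ↦ ∫ t in Ioi r, f t) = fun r ↦ (∫ t in Ioi 0, f t) - ∫ t in 0..r, f t := by
    ext r
    rw [← intervalIntegral.integral_Ioi_sub_Ioi' hfi.integrableOn hfi.integrableOn,
      sub_sub_cancel]
  rw [h]
  simpa using (hf.integral_hasStrictDerivAt 0 a).hasDerivAt.const_sub _

lemma continuous_gaussianPDFReal (μ : ℝ) (v : NNReal) : Continuous (gaussianPDFReal μ v) := by
  rw [gaussianPDFReal_def]
  fun_prop

lemma gaussianPDFReal_zero_one (x : ℝ) :
    gaussianPDFReal 0 1 x = (√(2 * π))⁻¹ * rexp (-x ^ 2 / 2) := by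
  simp [gaussianPDFReal]

lemma gaussianPDFReal_zero_one_div (x y : ℝ) :
    gaussianPDFReal 0 1 x / gaussianPDFReal 0 1 y = rexp ((y ^ 2 - x ^ 2) / 2) := by
  rw [gaussianPDFReal_zero_one, gaussianPDFReal_zero_one, mul_div_mul_left _ _ (by positivity),
    ← Real.exp_sub]
  ring_nf

noncomputable def gaussianTail (r : ℝ) : ℝ := ∫ t in Ioi r, gaussianPDFReal 0 1 t

lemma hasDerivAt_gaussianTail (r : ℝ) : HasDerivAt gaussianTail (-gaussianPDFReal 0 1 r) r :=
  hasDerivAt_integral_Ioi (continuous_gaussianPDFReal 0 1) (integrable_gaussianPDFReal 0 1) r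

lemma tendsto_gaussianTail_atTop : Tendsto gaussianTail atTop (𝓝 0) :=
  tendsto_integral_Ioi_zero tendsto_id

theorem tendsto_gaussianTail_add_div_div_gaussianTail (c : ℝ) :
    Tendsto (fun r ↦ gaussianTail (r + c / r) / gaussianTail r) atTop (𝓝 (rexp (-c))) := by
  have hshift : Tendsto (fun r : ℝ ↦ r + c / r) atTop atTop :=
    tendsto_id.atTop_add ((tendsto_const_nhds (x := c)).div_atTop tendsto_id)
  have hderiv : ∀ᶠ r in atTop, HasDerivAt (fun r ↦ gaussianTail (r + c / r))
      (-gaussianPDFReal 0 1 (r + c / r) * (1 - c / r ^ 2)) r := by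
    filter_upwards [eventually_ne_atTop 0] with r hr
    refine (hasDerivAt_gaussianTail _).comp r ?_
    simpa [div_eq_mul_inv, sub_eq_add_neg] using
      (hasDerivAt_id' r).fun_add ((hasDerivAt_inv hr).const_mul c)
  refine HasDerivAt.lhopital_zero_atTop hderiv (.of_forall hasDerivAt_gaussianTail)
    (.of_forall fun r ↦ neg_ne_zero.2 (gaussianPDFReal_pos 0 1 r one_ne_zero).ne')
    (tendsto_gaussianTail_atTop.comp hshift) tendsto_gaussianTail_atTop ?_
  have hlim : Tendsto (fun r : ℝ ↦ rexp (-c - c ^ 2 / 2 / r ^ 2) * (1 - c / r ^ 2)) atTop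
      (𝓝 (rexp (-c))) := by
    have hsq : ∀ a : ℝ, Tendsto (fun r : ℝ ↦ a / r ^ 2) atTop (𝓝 0) := fun a ↦
      tendsto_const_nhds.div_atTop (tendsto_pow_atTop two_ne_zero)
    simpa using ((continuous_exp.tendsto _).comp ((hsq (c ^ 2 / 2)).const_sub (-c))).mul
      ((hsq c).const_sub 1)
  refine hlim.congr' ?_
  filter_upwards [eventually_ne_atTop 0] with r hr
  rw [neg_mul, neg_div_neg_eq, mul_div_right_comm, gaussianPDFReal_zero_one_div]
  congr 2
  field_simp
  ring

lemma gt_and_neg_log_sub_sub_log_le_iff {r : ℝ} (hr : 0 < r) (x y : ℝ) :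
    y > r ∧ -log (y - r) - log r ≤ x ↔ r + rexp (-x) / r ≤ y := by
  rw [← le_sub_iff_add_le', div_le_iff₀ hr]
  constructor
  · rintro ⟨hry, hlog⟩
    rw [← le_log_iff_exp_le (by nlinarith), log_mul (by linarith) hr.ne']
    linarith
  · intro h
    have hyr : 0 < y - r := pos_of_mul_pos_left ((exp_pos _).trans_le h) hr.le
    rw [← le_log_iff_exp_le (by positivity), log_mul hyr.ne' hr.ne'] at h
    exact ⟨by linarith, by linarith⟩

namespace ProbabilityTheory.HasLaw

variable {Ω : Type*} [MeasurableSpace Ω] {P : Measure Ω} {N : Ω → ℝ}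

lemma measureReal_gt_eq_gaussianTail (hN : HasLaw N (gaussianReal 0 1) P) (a : ℝ) :
    P.real {ω | N ω > a} = gaussianTail a := by
  rw [hN.measureReal_eq measurableSet_Ioi, measureReal_def,
    gaussianReal_apply_eq_integral _ one_ne_zero]
  exact ENNReal.toReal_ofReal
    (setIntegral_nonneg measurableSet_Ioi fun t _ ↦ gaussianPDFReal_nonneg 0 1 t)

lemma measureReal_ge_eq_gaussianTail (hN : HasLaw N (gaussianReal 0 1) P) (a : ℝ) :
    P.real {ω | a ≤ N ω} = gaussianTail a := by
  have := nullSingletonClass_gaussianReal (μ := 0) one_ne_zero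
  rw [← hN.measureReal_gt_eq_gaussianTail, hN.measureReal_eq measurableSet_Ici,
    hN.measureReal_eq measurableSet_Ioi]
  exact measureReal_congr Ioi_ae_eq_Ici.symm

end ProbabilityTheory.HasLaw

theorem gaussian_conditional_gumbel_limit_general
    {Ω : Type*} [MeasureSpace Ω]
    (N : Ω → ℝ) (hN : Measure.map N ℙ = gaussianReal 0 1) (x : ℝ) :
    Tendsto (fun r : ℝ =>
        (ℙ {ω | N ω > r + Real.exp (-x) / r}).toReal / (ℙ {ω | N ω > r}).toReal)
      atTop (nhds (Real.exp (-Real.exp (-x)))) ∧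
    Tendsto (fun r : ℝ =>
        (ℙ {ω | N ω > r ∧ -Real.log (N ω - r) - Real.log r ≤ x}).toReal /
          (ℙ {ω | N ω > r}).toReal)
      atTop (nhds (Real.exp (-Real.exp (-x)))) := by
  have hlaw : HasLaw N (gaussianReal 0 1) :=
    ⟨aemeasurable_of_map_neZero (hN ▸ inferInstance), hN⟩
  have hratio := tendsto_gaussianTail_add_div_div_gaussianTail (rexp (-x))
  simp_rw [← measureReal_def, hlaw.measureReal_gt_eq_gaussianTail]
  refine ⟨hratio, hratio.congr' ?_⟩
  filter_upwards [eventually_gt_atTop 0] with r hr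
  simp_rw [gt_and_neg_log_sub_sub_log_le_iff hr, hlaw.measureReal_ge_eq_gaussianTail]

/-- For a standard Gaussian `N`:
`P(N > r + e^{-x}/r)/P(N > r) → exp(-e^{-x})` as `r → ∞`; equivalently the
conditional law of `-ln(N - r) - ln r` given `N > r` converges to the Gumbel
distribution `Λ(x) = e^{-e^{-x}}`. -/
theorem gaussian_conditional_gumbel_limit
    {Ω : Type*} [MeasureSpace Ω] [IsProbabilityMeasure (ℙ : Measure Ω)]
    (N : Ω → ℝ) (hN : Measure.map N ℙ = gaussianReal 0 1) (x : ℝ) :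
    Tendsto (fun r : ℝ =>
        (ℙ {ω | N ω > r + Real.exp (-x) / r}).toReal / (ℙ {ω | N ω > r}).toReal)
      atTop (nhds (Real.exp (-Real.exp (-x)))) ∧
    Tendsto (fun r : ℝ =>
        (ℙ {ω | N ω > r ∧ -Real.log (N ω - r) - Real.log r ≤ x}).toReal /
          (ℙ {ω | N ω > r}).toReal)
      atTop (nhds (Real.exp (-Real.exp (-x)))) :=
  gaussian_conditional_gumbel_limit_general N hN x
end

section
/- Let F be a distribution function, Φ a continuous distribution function, and (a_n), (b_n) real sequences with a_n > 0. Then F^n(a_n x + b_n) → Φ(x) for all x ∈ ℝ if and only if for all x with Φ(x) ≠ 0, n·[1 - F(a_n x + b_n)] → -ln Φ(x). -/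
open Filter Topology

/-- `log p / (p-1)`, patched to `1` at `p = 1`. -/
private noncomputable def gfun (p : ℝ) : ℝ := if p = 1 then 1 else Real.log p / (p - 1)

/-- `(p-1) / log p`, patched to `1` at `p = 1`. -/
private noncomputable def hfun (p : ℝ) : ℝ := if p = 1 then 1 else (p - 1) / Real.log p

private lemma slope_log_tendsto :
    Tendsto (fun p : ℝ => Real.log p / (p - 1)) (𝓝[≠] (1 : ℝ)) (𝓝 1) := by
  have h := Real.hasDerivAt_log one_ne_zero
  rw [hasDerivAt_iff_tendsto_slope] at h
  simp only [inv_one] at h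
  refine h.congr (fun p => ?_)
  simp [slope, Real.log_one, div_eq_inv_mul]

private lemma gfun_tendsto : Tendsto gfun (𝓝 (1 : ℝ)) (𝓝 1) := by
  have h1 : Tendsto gfun (𝓝[≠] (1 : ℝ)) (𝓝 1) := by
    refine slope_log_tendsto.congr' ?_
    filter_upwards [self_mem_nhdsWithin] with p hp
    simp [gfun, Set.mem_compl_singleton_iff.1 hp]
  have h2 : Tendsto gfun (pure (1 : ℝ)) (𝓝 1) := by
    have hg : gfun 1 = 1 := by simp [gfun]
    simpa [hg] using tendsto_pure_nhds gfun 1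
  have := tendsto_sup.2 ⟨h1, h2⟩
  rwa [nhdsNE_sup_pure] at this

private lemma hfun_tendsto : Tendsto hfun (𝓝 (1 : ℝ)) (𝓝 1) := by
  have := gfun_tendsto.inv₀ one_ne_zero
  rw [inv_one] at this
  refine this.congr (fun p => ?_)
  unfold gfun hfun
  split_ifs with h
  · simp
  · rw [inv_div]

private lemma log_ne_zero_aux {p : ℝ} (hp : 0 < p) (h1 : p ≠ 1) : Real.log p ≠ 0 := by
  intro h
  rcases Real.log_eq_zero.1 h with h' | h' | h' <;> [linarith; exact h1 h'; linarith]

private lemma id_h (n : ℕ) {p : ℝ} (hp : 0 < p) :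
    (n : ℝ) * (1 - p) = -((n : ℝ) * Real.log p) * hfun p := by
  by_cases h : p = 1
  · simp [h, hfun]
  · have hlog := log_ne_zero_aux hp h
    simp only [hfun, if_neg h]
    field_simp
    ring

private lemma id_g (n : ℕ) (p : ℝ) :
    (n : ℝ) * Real.log p = -((n : ℝ) * (1 - p)) * gfun p := by
  by_cases h : p = 1
  · simp [h, gfun]
  · have hp1 : p - 1 ≠ 0 := sub_ne_zero.2 h
    simp only [gfun, if_neg h]
    field_simp
    ring

/-- If `n (1 - pₙ) → c`, then `pₙ ^ n → exp (-c)`. -/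
private lemma aux2 (p : ℕ → ℝ) (c : ℝ)
    (h : Tendsto (fun n : ℕ => (n : ℝ) * (1 - p n)) atTop (𝓝 c)) :
    Tendsto (fun n => p n ^ n) atTop (𝓝 (Real.exp (-c))) := by
  have hp1 : Tendsto p atTop (𝓝 1) := by
    have h0 := h.mul tendsto_inv_atTop_nhds_zero_nat
    rw [mul_zero] at h0
    have hsub : Tendsto (fun n => 1 - p n) atTop (𝓝 0) := by
      refine h0.congr' ?_
      filter_upwards [eventually_ge_atTop 1] with n hn
      have hne : (n : ℝ) ≠ 0 := Nat.cast_ne_zero.2 (by omega)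
      field_simp
    have := hsub.const_sub 1
    simpa using this
  have hppos : ∀ᶠ n in atTop, 0 < p n := hp1.eventually (eventually_gt_nhds one_pos)
  have hlog : Tendsto (fun n : ℕ => (n : ℝ) * Real.log (p n)) atTop (𝓝 (-c)) := by
    have hg : Tendsto (fun n => gfun (p n)) atTop (𝓝 1) := gfun_tendsto.comp hp1
    have := h.neg.mul hg
    rw [mul_one] at this
    exact this.congr fun n => (id_g n (p n)).symm
  have hexp := (Real.continuous_exp.tendsto _).comp hlog
  refine hexp.congr' ?_
  filter_upwards [hppos] with n hn
  simp only [Function.comp_apply]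
  rw [Real.exp_nat_mul, Real.exp_log hn]

/-- If `pₙ ^ n → L > 0` with `pₙ ≥ 0`, then `n (1 - pₙ) → -log L`. -/
private lemma aux1 (p : ℕ → ℝ) (h0 : ∀ n, 0 ≤ p n) (L : ℝ) (hL : 0 < L)
    (h : Tendsto (fun n => p n ^ n) atTop (𝓝 L)) :
    Tendsto (fun n : ℕ => (n : ℝ) * (1 - p n)) atTop (𝓝 (-Real.log L)) := by
  have hev : ∀ᶠ n in atTop, L / 2 < p n ^ n := h.eventually (eventually_gt_nhds (half_lt_self hL))
  have hppos : ∀ᶠ n in atTop, 0 < p n := by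
    filter_upwards [hev, eventually_ge_atTop 1] with n h1 h2
    by_contra hc
    push_neg at hc
    have hz : p n = 0 := le_antisymm hc (h0 n)
    rw [hz, zero_pow (by omega)] at h1
    linarith
  have hlogL : Tendsto (fun n : ℕ => (n : ℝ) * Real.log (p n)) atTop (𝓝 (Real.log L)) := by
    have := (Real.continuousAt_log hL.ne').tendsto.comp h
    refine this.congr fun n => ?_
    simp [Function.comp, Real.log_pow]
  have hp1 : Tendsto p atTop (𝓝 1) := by
    have hlp : Tendsto (fun n => Real.log (p n)) atTop (𝓝 0) := by
      have hm := hlogL.mul tendsto_inv_atTop_nhds_zero_nat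
      rw [mul_zero] at hm
      refine hm.congr' ?_
      filter_upwards [eventually_ge_atTop 1] with n hn
      have hne : (n : ℝ) ≠ 0 := Nat.cast_ne_zero.2 (by omega)
      field_simp
    have := (Real.continuous_exp.tendsto _).comp hlp
    rw [Real.exp_zero] at this
    refine this.congr' ?_
    filter_upwards [hppos] with n hn
    simp [Function.comp, Real.exp_log hn]
  have hh : Tendsto (fun n => hfun (p n)) atTop (𝓝 1) := hfun_tendsto.comp hp1
  have hm := hlogL.neg.mul hh
  rw [mul_one] at hm
  refine hm.congr' ?_
  filter_upwards [hppos] with n hn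
  exact (id_h n hn).symm

/-- Gnedenko's criterion: for a distribution function `F`, a continuous
distribution function `Φ`, and normalizing sequences `a_n > 0`, `b_n`,
`F^n(a_n x + b_n) → Φ(x)` for all `x` iff `n·[1 - F(a_n x + b_n)] → -ln Φ(x)`
whenever `Φ(x) ≠ 0`. -/
theorem gnedenko_criterion
    (F Φ : ℝ → ℝ)
    (hF_mono : Monotone F)
    (hF_rc : ∀ x, ContinuousWithinAt F (Set.Ici x) x)
    (hF_bot : Tendsto F atBot (𝓝 0)) (hF_top : Tendsto F atTop (𝓝 1))
    (hΦ_mono : Monotone Φ) (hΦ_cont : Continuous Φ)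
    (hΦ_bot : Tendsto Φ atBot (𝓝 0)) (hΦ_top : Tendsto Φ atTop (𝓝 1))
    (a b : ℕ → ℝ) (ha : ∀ n, 0 < a n) :
    (∀ x : ℝ, Tendsto (fun n : ℕ => (F (a n * x + b n)) ^ n) atTop (𝓝 (Φ x))) ↔
      (∀ x : ℝ, Φ x ≠ 0 →
        Tendsto (fun n : ℕ => (n : ℝ) * (1 - F (a n * x + b n))) atTop
          (𝓝 (-Real.log (Φ x)))) := by
  have hF0 : ∀ y, 0 ≤ F y := fun y =>
    le_of_tendsto hF_bot (by filter_upwards [eventually_le_atBot y] with z hz using hF_mono hz)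
  have hΦ0 : ∀ y, 0 ≤ Φ y := fun y =>
    le_of_tendsto hΦ_bot (by filter_upwards [eventually_le_atBot y] with z hz using hΦ_mono hz)
  constructor
  · intro H x hx
    exact aux1 _ (fun n => hF0 _) _ ((hΦ0 x).lt_of_ne' hx) (H x)
  · intro H x
    by_cases hx0 : Φ x = 0
    · -- the case Φ x = 0
      rw [hx0]
      set S := {t : ℝ | Φ t = 0} with hS
      have hxS : x ∈ S := hx0
      obtain ⟨t, ht⟩ := (hΦ_top.eventually (eventually_gt_nhds (by norm_num : (1:ℝ)/2 < 1))).exists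
      have hbdd : BddAbove S := by
        refine ⟨t, fun u hu => ?_⟩
        by_contra hc
        push_neg at hc
        have h2 := hΦ_mono hc.le
        rw [Set.mem_setOf_eq] at hu
        rw [hu] at h2
        linarith
      have hSclosed : IsClosed S := isClosed_eq hΦ_cont continuous_const
      set s := sSup S with hsdef
      have hsS : s ∈ S := hSclosed.csSup_mem ⟨x, hxS⟩ hbdd
      have hΦs : Φ s = 0 := hsS
      have hxs : x ≤ s := le_csSup hbdd hxS
      rw [tendsto_order]
      constructor
      · intro c hc
        filter_upwards with n
        exact lt_of_lt_of_le hc (pow_nonneg (hF0 _) n)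
      · intro ε hε
        have h2 : ∀ᶠ y in 𝓝[>] s, Φ y < ε := by
          have hT : Tendsto Φ (𝓝[>] s) (𝓝 0) := by
            rw [← hΦs]
            exact (hΦ_cont.tendsto s).mono_left nhdsWithin_le_nhds
          exact hT.eventually (eventually_lt_nhds hε)
        obtain ⟨y, hyε, hys⟩ := (h2.and eventually_mem_nhdsWithin).exists
        have hys' : s < y := hys
        have hΦy_ne : Φ y ≠ 0 := fun h => absurd (le_csSup hbdd h) (not_le.2 hys')
        have hΦy_pos : 0 < Φ y := (hΦ0 y).lt_of_ne' hΦy_ne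
        have hy := aux2 (fun n => F (a n * y + b n)) (-Real.log (Φ y)) (H y hΦy_ne)
        rw [neg_neg, Real.exp_log hΦy_pos] at hy
        have hylt : ∀ᶠ n in atTop, F (a n * y + b n) ^ n < ε :=
          hy.eventually (eventually_lt_nhds hyε)
        filter_upwards [hylt] with n hn
        refine lt_of_le_of_lt ?_ hn
        refine pow_le_pow_left₀ (hF0 _) (hF_mono ?_) n
        have : a n * x ≤ a n * y :=
          mul_le_mul_of_nonneg_left (hxs.trans hys'.le) (ha n).le
        linarith
    · -- the case Φ x ≠ 0
      have hΦx_pos : 0 < Φ x := (hΦ0 x).lt_of_ne' hx0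
      have := aux2 (fun n => F (a n * x + b n)) (-Real.log (Φ x)) (H x hx0)
      rwa [neg_neg, Real.exp_log hΦx_pos] at this
end

section
/- Let X be a real random variable with tail R(x) = P(X > x), and suppose R(r) > 0 for all r and that there is a function a(r) > 0 with lim_{r→∞} R(r + a(r)·x)/R(r) = e^{-x} for all x ∈ ℝ. Define H_r(x) = P(-ln(X - r) ≤ x | X > r). Then lim_{r→∞} H_r(x - ln a(r)) = exp(-exp(-x)) for all x ∈ ℝ. -/
open MeasureTheory ProbabilityTheory Filter Topology Real

/-- Gumbel limit for logarithmically transformed residual life times: if the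
tail `R(r) = P(X > r)` is positive and satisfies
`R(r + a(r)x)/R(r) → e^{-x}` for all `x` with `a(r) > 0`, then the conditional
distribution function `H_r(x) = P(-ln(X - r) ≤ x | X > r)` satisfies
`H_r(x - ln a(r)) → exp(-exp(-x))` as `r → ∞`. -/
theorem log_residual_gumbel_limit
    {Ω : Type*} [MeasureSpace Ω] [IsProbabilityMeasure (ℙ : Measure Ω)]
    (X : Ω → ℝ)
    (R : ℝ → ℝ) (hR : ∀ r : ℝ, R r = (ℙ {ω | X ω > r}).toReal)
    (hRpos : ∀ r : ℝ, 0 < R r)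
    (a : ℝ → ℝ) (ha : ∀ r : ℝ, 0 < a r)
    (hscal : ∀ x : ℝ,
      Tendsto (fun r : ℝ => R (r + a r * x) / R r) atTop (𝓝 (Real.exp (-x))))
    (H : ℝ → ℝ → ℝ)
    (hH : ∀ r x : ℝ,
      H r x = (ℙ {ω | X ω > r ∧ -Real.log (X ω - r) ≤ x}).toReal / (ℙ {ω | X ω > r}).toReal)
    (x : ℝ) :
    Tendsto (fun r : ℝ => H r (x - Real.log (a r))) atTop
      (𝓝 (Real.exp (-Real.exp (-x)))) := by
  set L := Real.exp (-Real.exp (-x)) with hL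
  have hexp : (0:ℝ) < Real.exp (-x) := Real.exp_pos _
  have hset : ∀ r : ℝ, {ω | X ω > r ∧ -Real.log (X ω - r) ≤ x - Real.log (a r)}
      = {ω | X ω ≥ r + a r * Real.exp (-x)} := by
    intro r
    ext ω
    have hc : 0 < a r * Real.exp (-x) := mul_pos (ha r) hexp
    have hlogc : Real.log (a r * Real.exp (-x)) = Real.log (a r) - x := by
      rw [Real.log_mul (ne_of_gt (ha r)) (ne_of_gt hexp), Real.log_exp]; ring
    simp only [Set.mem_setOf_eq]
    constructor
    · rintro ⟨h1, h2⟩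
      have hpos : 0 < X ω - r := by linarith
      have hlog : Real.log (a r * Real.exp (-x)) ≤ Real.log (X ω - r) := by
        rw [hlogc]; linarith
      have := (Real.log_le_log_iff hc hpos).mp hlog
      linarith
    · intro h
      have h1 : X ω > r := by nlinarith
      have hpos : 0 < X ω - r := by linarith
      refine ⟨h1, ?_⟩
      have hlog : Real.log (a r * Real.exp (-x)) ≤ Real.log (X ω - r) :=
        Real.log_le_log hc (by linarith)
      rw [hlogc] at hlog
      linarith
  have hHeq : ∀ r, H r (x - Real.log (a r))
      = (ℙ {ω | X ω ≥ r + a r * Real.exp (-x)}).toReal / R r := by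
    intro r; rw [hH, hset, ← hR]
  rw [Metric.tendsto_nhds]
  intro ε hε
  have hlow := (hscal (Real.exp (-x))).eventually
    (eventually_gt_nhds (show L - ε < L by linarith))
  have hcont : Tendsto (fun t : ℝ => Real.exp (-t)) (𝓝[<] (Real.exp (-x))) (𝓝 L) :=
    ((Real.continuous_exp.comp continuous_neg).tendsto (Real.exp (-x))).mono_left
      nhdsWithin_le_nhds
  have hev : ∀ᶠ t in 𝓝[<] (Real.exp (-x)), Real.exp (-t) < L + ε ∧ t < Real.exp (-x) :=
    (hcont.eventually (eventually_lt_nhds (show L < L + ε by linarith))).and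
      self_mem_nhdsWithin
  obtain ⟨t, htL, htlt⟩ := hev.exists
  have hup := (hscal t).eventually (eventually_lt_nhds htL)
  filter_upwards [hlow, hup] with r h1 h2
  rw [hHeq r, Real.dist_eq, abs_sub_lt_iff]
  have hc : 0 < a r * Real.exp (-x) := mul_pos (ha r) hexp
  set M := (ℙ {ω | X ω ≥ r + a r * Real.exp (-x)}).toReal with hM
  have hlb : R (r + a r * Real.exp (-x)) ≤ M := by
    rw [hR]
    exact ENNReal.toReal_mono (measure_ne_top _ _)
      (measure_mono (Set.setOf_subset_setOf.mpr fun ω h => le_of_lt h))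
  have hub : M ≤ R (r + a r * t) := by
    rw [hR]
    refine ENNReal.toReal_mono (measure_ne_top _ _) (measure_mono (fun ω hω => ?_))
    have : a r * t < a r * Real.exp (-x) := by
      exact mul_lt_mul_of_pos_left htlt (ha r)
    simp only [Set.mem_setOf_eq] at hω ⊢
    linarith
  have hRr : 0 < R r := hRpos r
  have hlb' : R (r + a r * Real.exp (-x)) / R r ≤ M / R r :=
    div_le_div_of_nonneg_right hlb hRr.le
  have hub' : M / R r ≤ R (r + a r * t) / R r :=
    div_le_div_of_nonneg_right hub hRr.le
  constructor <;> linarith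
end
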